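/- arXiv:2412.12786 — 2 statements merged into one kernel-verified Lean document; each statement's English description precedes it below -/
import Mathlib

section
/- For every integer k ≥ 2 and for every n, there exists a k-critical ordered matching with more than n vertices. In particular, for every k ≥ 2 there exist infinitely many k-critical ordered matchings. -/
/-!
Common framework: ordered graphs on vertex set `Fin n` (the vertex order is the
order of `Fin n`), with edges encoded as pairs `(u, v)` with `u < v`.
-/

namespace MixedLayouts

/-- An ordered graph: vertices `Fin n` (with their natural linear order),
edges given as ordered pairs `(u, v)` with `u < v`. -/
structure OGraph where
  n : ℕ
  E : Finset (Fin n × Fin n)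
  lt_of_mem : ∀ e ∈ E, e.1 < e.2

/-- Two edges `e = uv`, `f = xy` cross: `u ≺ x ≺ v ≺ y` (or symmetrically). -/
def Cross {n : ℕ} (e f : Fin n × Fin n) : Prop :=
  (e.1 < f.1 ∧ f.1 < e.2 ∧ e.2 < f.2) ∨ (f.1 < e.1 ∧ e.1 < f.2 ∧ f.2 < e.2)

/-- Two edges `e = uv`, `f = xy` nest: `u ≺ x ≺ y ≺ v` (or symmetrically). -/
def Nest {n : ℕ} (e f : Fin n × Fin n) : Prop :=
  (e.1 < f.1 ∧ f.2 < e.2) ∨ (f.1 < e.1 ∧ e.2 < f.2)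

/-- `e ↗ f`: both endpoints increase (for separated layouts this is crossing). -/
def Up {n : ℕ} (e f : Fin n × Fin n) : Prop := e.1 < f.1 ∧ e.2 < f.2

/-- `e ↘ f`: first endpoint increases, second decreases
(for separated layouts this means `f` nests inside `e`). -/
def Down {n : ℕ} (e f : Fin n × Fin n) : Prop := e.1 < f.1 ∧ f.2 < e.2

namespace OGraph

/-- Degree of a vertex. -/
def degree (G : OGraph) (v : Fin G.n) : ℕ :=
  (G.E.filter fun e => e.1 = v ∨ e.2 = v).card

/-- An ordered matching: every vertex has degree exactly one. -/
def IsMatching (G : OGraph) : Prop := ∀ v : Fin G.n, G.degree v = 1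

/-- A separated layout of a bipartite ordered graph: there is a threshold `t`
such that every edge goes from a vertex before `t` to a vertex from `t` on. -/
def Separated (G : OGraph) : Prop :=
  ∃ t : ℕ, ∀ e ∈ G.E, (e.1 : ℕ) < t ∧ t ≤ (e.2 : ℕ)

/-- An `s`-stack `q`-queue layout: a partition of the edges into `s` stacks
(pages `0, …, s-1`, pairwise non-crossing) and `q` queues
(pages `s, …, s+q-1`, pairwise non-nesting). -/
def HasLayout (G : OGraph) (s q : ℕ) : Prop :=
  ∃ c : Fin G.n × Fin G.n → ℕ,
    (∀ e ∈ G.E, c e < s + q) ∧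
    ∀ e ∈ G.E, ∀ f ∈ G.E, c e = c f →
      (c e < s → ¬ Cross e f) ∧ (s ≤ c e → ¬ Nest e f)

/-- The mixed page number: the minimum of `s + q` over all
`s`-stack `q`-queue layouts. -/
noncomputable def mn (G : OGraph) : ℕ :=
  sInf {m | ∃ s q, s + q = m ∧ G.HasLayout s q}

/-- A `t`-thick `k`-twist: `k` groups of `t` edges each, edges within a group
pairwise nest, edges from different groups pairwise cross. -/
def HasThickTwist (G : OGraph) (k t : ℕ) : Prop :=
  ∃ e : Fin k → Fin t → Fin G.n × Fin G.n,
    (∀ i j, e i j ∈ G.E) ∧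
    (Function.Injective fun p : Fin k × Fin t => e p.1 p.2) ∧
    (∀ i : Fin k, ∀ j j' : Fin t, j ≠ j' → Nest (e i j) (e i j')) ∧
    (∀ i i' : Fin k, ∀ j j' : Fin t, i ≠ i' → Cross (e i j) (e i' j'))

/-- A `t`-thick `k`-rainbow: `k` groups of `t` edges each, edges within a group
pairwise cross, edges from different groups pairwise nest. -/
def HasThickRainbow (G : OGraph) (k t : ℕ) : Prop :=
  ∃ e : Fin k → Fin t → Fin G.n × Fin G.n,
    (∀ i j, e i j ∈ G.E) ∧
    (Function.Injective fun p : Fin k × Fin t => e p.1 p.2) ∧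
    (∀ i : Fin k, ∀ j j' : Fin t, j ≠ j' → Cross (e i j) (e i j')) ∧
    (∀ i i' : Fin k, ∀ j j' : Fin t, i ≠ i' → Nest (e i j) (e i' j'))

/-- A `k`-thick pattern: a `k`-thick `k`-twist or a `k`-thick `k`-rainbow. -/
def HasThickPattern (G : OGraph) (k : ℕ) : Prop :=
  G.HasThickTwist k k ∨ G.HasThickRainbow k k

/-- `G` contains a `k`-⋄-pattern: `k²` edges `e i j` with
`e i j ↗ e i j'` for `j < j'` and `e i j ↘ e i' j` for `i < i'`. -/
def HasDiamond (G : OGraph) (k : ℕ) : Prop :=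
  ∃ e : Fin k → Fin k → Fin G.n × Fin G.n,
    (∀ i j, e i j ∈ G.E) ∧
    (Function.Injective fun p : Fin k × Fin k => e p.1 p.2) ∧
    (∀ i : Fin k, ∀ j j' : Fin k, j < j' → Up (e i j) (e i j')) ∧
    (∀ j : Fin k, ∀ i i' : Fin k, i < i' → Down (e i j) (e i' j))

/-- The edge set of `G` is exactly a `k`-⋄-pattern. -/
def FormsDiamond (G : OGraph) (k : ℕ) : Prop :=
  ∃ e : Fin k → Fin k → Fin G.n × Fin G.n,
    (Function.Injective fun p : Fin k × Fin k => e p.1 p.2) ∧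
    (∀ i : Fin k, ∀ j j' : Fin k, j < j' → Up (e i j) (e i j')) ∧
    (∀ j : Fin k, ∀ i i' : Fin k, i < i' → Down (e i j) (e i' j)) ∧
    G.E = Finset.image (fun p : Fin k × Fin k => e p.1 p.2) Finset.univ

/-- Delete an edge. -/
def erase (G : OGraph) (e : Fin G.n × Fin G.n) : OGraph :=
  ⟨G.n, G.E.erase e, fun f hf => G.lt_of_mem f (Finset.mem_of_mem_erase hf)⟩

/-- `(s,q)`-critical: no `s`-stack `q`-queue layout, but every one-edge-deleted
subgraph has one. -/
def IsSQCritical (G : OGraph) (s q : ℕ) : Prop :=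
  ¬ G.HasLayout s q ∧ ∀ e ∈ G.E, (G.erase e).HasLayout s q

/-- `k`-critical: `mn G > k`, but `mn (G - e) ≤ k` for every edge `e`. -/
def IsKCritical (G : OGraph) (k : ℕ) : Prop :=
  k < G.mn ∧ ∀ e ∈ G.E, (G.erase e).mn ≤ k

end OGraph

/-- An ordered graph `G` contains the pattern `H`: an order-preserving injection
of the vertices mapping edges to edges. -/
def Contains (G H : OGraph) : Prop :=
  ∃ φ : Fin H.n → Fin G.n, StrictMono φ ∧ ∀ e ∈ H.E, (φ e.1, φ e.2) ∈ G.E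

/-- A chain of the poset `P(M)` of a separated matching
(elements: edges; order: `↗`). -/
def IsPChain {n : ℕ} (C : Finset (Fin n × Fin n)) : Prop :=
  ∀ e ∈ C, ∀ f ∈ C, e ≠ f → Up e f ∨ Up f e

/-- An antichain of the poset `P(M)` of a separated matching. -/
def IsPAntichain {n : ℕ} (C : Finset (Fin n × Fin n)) : Prop :=
  ∀ e ∈ C, ∀ f ∈ C, e ≠ f → ¬ Up e f ∧ ¬ Up f e

/-- `c_i` for an abstract finite poset: the maximum number of elements
covered by `i` chains. -/
noncomputable def chainCover (α : Type) [Fintype α] [PartialOrder α] [DecidableEq α]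
    (i : ℕ) : ℕ :=
  sSup {m | ∃ C : Fin i → Finset α,
    (∀ j, IsChain (· ≤ ·) (C j : Set α)) ∧ (Finset.univ.biUnion C).card = m}

/-- `a_i` for an abstract finite poset: the maximum number of elements
covered by `i` antichains. -/
noncomputable def antichainCover (α : Type) [Fintype α] [PartialOrder α] [DecidableEq α]
    (i : ℕ) : ℕ :=
  sSup {m | ∃ A : Fin i → Finset α,
    (∀ j, IsAntichain (· ≤ ·) (A j : Set α)) ∧ (Finset.univ.biUnion A).card = m}

end MixedLayouts

/-!
For each split `s ≤ k` we build a matching with no `s`-stack `(k - s)`-queue layout but with a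
layout for every other split `s' ≤ k`, and with one for `s` itself as soon as any edge is deleted.
These gadgets placed side by side form a `k`-critical matching.

The gadget for `s` is a core wrapped in `k - s` rings, a ring being a twist of `s + 1` edges that
nests everything inside it. If the inside `D` has no `(s, q)` layout, the ring around it has no
`(s, q + 1)` layout: one of its pairwise crossing edges must go to a queue, which is then useless
for `D`, whose edges it nests. Conversely, if `D` is `(s, q)`-critical, deleting an edge of `D`
leaves room for the whole ring on one extra queue, and deleting an edge of the ring leaves `s`
edges that fit on the `s` stacks next to an `(s, q + 1)` layout of `D`. So criticality passes
outwards from a core that is `(s, 0)`-critical: a twist of `s + 1` edges or, for `s = 2`, edges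
whose crossing graph is an odd cycle of any length `2 t + 3`, which makes the matching as large
as we like.
-/

namespace MixedLayouts

open Finset Function

variable {n m : ℕ}

section CrossNest

theorem cross_irrefl (e : Fin n × Fin n) : ¬ Cross e e := by
  simp only [Cross, Fin.lt_def]; omega

theorem nest_irrefl (e : Fin n × Fin n) : ¬ Nest e e := by
  simp only [Nest, Fin.lt_def]; omega

variable {e f : Fin n × Fin n}

theorem Cross.symm (h : Cross e f) : Cross f e := by
  simp only [Cross] at *; tauto

theorem Nest.symm (h : Nest e f) : Nest f e := by
  simp only [Nest] at *; tauto

theorem Nest.not_cross (h : Nest e f) : ¬ Cross e f := by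
  simp only [Nest, Cross, Fin.lt_def] at *; omega

theorem Cross.not_nest (h : Cross e f) : ¬ Nest e f := fun hn => hn.not_cross h

theorem cross_map_iff {φ : Fin m → Fin n} (hφ : StrictMono φ) {e f : Fin m × Fin m} :
    Cross (Prod.map φ φ e) (Prod.map φ φ f) ↔ Cross e f := by
  simp only [Cross, Prod.map_fst, Prod.map_snd, hφ.lt_iff_lt]

theorem nest_map_iff {φ : Fin m → Fin n} (hφ : StrictMono φ) {e f : Fin m × Fin m} :
    Nest (Prod.map φ φ e) (Prod.map φ φ f) ↔ Nest e f := by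
  simp only [Nest, Prod.map_fst, Prod.map_snd, hφ.lt_iff_lt]

end CrossNest

def IsLayout (s q : ℕ) (E : Finset (Fin n × Fin n)) (c : Fin n × Fin n → ℕ) : Prop :=
  (∀ e ∈ E, c e < s + q) ∧
    ∀ e ∈ E, ∀ f ∈ E, c e = c f → (c e < s → ¬ Cross e f) ∧ (s ≤ c e → ¬ Nest e f)

namespace IsLayout

variable {s q s' q' : ℕ} {E : Finset (Fin n × Fin n)} {c : Fin n × Fin n → ℕ}

theorem comp_map {E' : Finset (Fin m × Fin m)} (h : IsLayout s q E c) {φ : Fin m → Fin n}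
    (hφ : StrictMono φ) (hE : ∀ e ∈ E', Prod.map φ φ e ∈ E) :
    IsLayout s q E' (c ∘ Prod.map φ φ) := by
  refine ⟨fun e he => h.1 _ (hE e he), fun e he f hf hef => ?_⟩
  rw [← cross_map_iff hφ, ← nest_map_iff hφ]
  exact h.2 _ (hE e he) _ (hE f hf) hef

theorem relabel (h : IsLayout s q E c) (g : ℕ → ℕ)
    (hinj : ∀ e ∈ E, ∀ f ∈ E, g (c e) = g (c f) → c e = c f)
    (hstack : ∀ e ∈ E, g (c e) < s' ↔ c e < s) (hlt : ∀ e ∈ E, g (c e) < s' + q') :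
    IsLayout s' q' E (g ∘ c) := by
  refine ⟨hlt, fun e he f hf hef => ?_⟩
  have hcef := hinj e he f hf hef
  have hstack_e := hstack e he
  obtain ⟨hcross, hnest⟩ := h.2 e he f hf hcef
  exact ⟨fun hs => hcross (hstack_e.1 hs), fun hs => hnest (by simp only [comp_apply] at hs; omega)⟩

theorem mono (h : IsLayout s q E c) (hs : s ≤ s') (hq : q ≤ q') :
    IsLayout s' q' E ((fun p => if p < s then p else p + (s' - s)) ∘ c) := by
  refine h.relabel _ (fun e _ f _ hef => ?_) (fun e _ => ?_) (fun e he => ?_)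
  · split_ifs at hef <;> omega
  · split_ifs <;> omega
  · have := h.1 e he; split_ifs <;> omega

theorem of_injOn (hc : Set.InjOn c E) (hlt : ∀ e ∈ E, c e < s + q) : IsLayout s q E c := by
  refine ⟨hlt, fun e he f hf hef => ?_⟩
  obtain rfl := hc he hf hef
  exact ⟨fun _ => cross_irrefl e, fun _ => nest_irrefl e⟩

theorem of_forall_not_nest (h : ∀ e ∈ E, ∀ f ∈ E, ¬ Nest e f) {p : ℕ} (hsp : s ≤ p)
    (hpq : p < s + q) : IsLayout s q E fun _ => p :=
  ⟨fun _ _ => hpq, fun e he f hf _ => ⟨fun hp => absurd hsp (not_le.2 hp), fun _ => h e he f hf⟩⟩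

theorem remove_queue {p : ℕ} (h : IsLayout s (q + 1) E c) (hsp : s ≤ p) (hpq : p < s + (q + 1))
    (hfree : ∀ e ∈ E, c e ≠ p) :
    IsLayout s q E ((fun x => if x < p then x else x - 1) ∘ c) := by
  refine h.relabel _ (fun e he f hf hef => ?_) (fun e he => ?_) (fun e he => ?_)
  · have := hfree e he; have := hfree f hf
    split_ifs at hef <;> omega
  · have := hfree e he
    split_ifs <;> omega
  · have := hfree e he; have := h.1 e he
    split_ifs <;> omega

theorem insert_of_forall_ne (h : IsLayout s q E c) {p : ℕ} (hp : p < s + q)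
    (hfresh : ∀ f ∈ E, c f ≠ p) (e : Fin n × Fin n) :
    IsLayout s q (insert e E) (update c e p) := by
  have hmem : ∀ f ∈ insert e E, f ≠ e → f ∈ E := fun f hf hfe => (mem_insert.1 hf).resolve_left hfe
  refine ⟨fun f hf => ?_, fun f hf g hg hfg => ?_⟩
  · by_cases hfe : f = e
    · simpa [hfe] using hp
    · simpa [hfe] using h.1 f (hmem f hf hfe)
  · by_cases hfe : f = e <;> by_cases hge : g = e
    · subst hfe hge; exact ⟨fun _ => cross_irrefl _, fun _ => nest_irrefl _⟩
    · simp only [hfe, update_self, update_of_ne hge] at hfg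
      exact absurd hfg.symm (hfresh g (hmem g hg hge))
    · simp only [hge, update_self, update_of_ne hfe] at hfg
      exact absurd hfg (hfresh f (hmem f hf hfe))
    · simp only [update_of_ne hfe, update_of_ne hge] at hfg ⊢
      exact h.2 f (hmem f hf hfe) g (hmem g hg hge) hfg

end IsLayout

namespace OGraph

variable {G : OGraph} {s q s' q' k : ℕ}

theorem mem_erase {e f : Fin G.n × Fin G.n} : f ∈ (G.erase e).E ↔ f ≠ e ∧ f ∈ G.E :=
  Finset.mem_erase

theorem hasLayout_iff : G.HasLayout s q ↔ ∃ c, IsLayout s q G.E c := Iff.rfl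

theorem HasLayout.mono (h : G.HasLayout s q) (hs : s ≤ s') (hq : q ≤ q') : G.HasLayout s' q' :=
  let ⟨_, hc⟩ := hasLayout_iff.1 h; ⟨_, hc.mono hs hq⟩

theorem hasLayout_card_zero (G : OGraph) : G.HasLayout #G.E 0 := by
  refine ⟨fun e => if he : e ∈ G.E then G.E.equivFin ⟨e, he⟩ else 0, IsLayout.of_injOn ?_ ?_⟩
  · intro e he f hf hef
    simp only [dif_pos (mem_coe.1 he), dif_pos (mem_coe.1 hf)] at hef
    simpa using G.E.equivFin.injective (Fin.ext hef)
  · intro e he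
    simp [he]

theorem HasLayout.of_erase_stack {e : Fin G.n × Fin G.n} (he : e ∈ G.E)
    (h : (G.erase e).HasLayout s q) : G.HasLayout (s + 1) q := by
  obtain ⟨c, hc⟩ := hasLayout_iff.1 h
  have h' : IsLayout (s + 1) q (insert e (G.E.erase e)) _ :=
    (hc.mono (by omega : s ≤ s + 1) le_rfl).insert_of_forall_ne (p := s) (by omega)
    (fun f _ => by simp only [comp_apply]; split_ifs <;> omega) e
  rw [insert_erase he] at h'
  exact ⟨_, h'⟩

theorem HasLayout.of_erase_queue {e : Fin G.n × Fin G.n} (he : e ∈ G.E)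
    (h : (G.erase e).HasLayout s q) : G.HasLayout s (q + 1) := by
  obtain ⟨c, hc⟩ := hasLayout_iff.1 h
  have h' : IsLayout s (q + 1) (insert e (G.E.erase e)) _ :=
    (hc.mono le_rfl (by omega : q ≤ q + 1)).insert_of_forall_ne (p := s + q) (by omega)
    (fun f hf => by have := hc.1 f hf; simp only [comp_apply]; split_ifs <;> omega) e
  rw [insert_erase he] at h'
  exact ⟨_, h'⟩

theorem IsSQCritical.hasLayout_succ (h : G.IsSQCritical s q) : G.HasLayout s (q + 1) := by
  obtain ⟨e, he⟩ : G.E.Nonempty := by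
    refine nonempty_iff_ne_empty.2 fun hE => h.1 ?_
    exact G.hasLayout_card_zero.mono (by simp [hE]) (Nat.zero_le q)
  exact (h.2 e he).of_erase_queue he

theorem HasLayout.mn_le (h : G.HasLayout s q) : G.mn ≤ s + q :=
  Nat.sInf_le ⟨s, q, rfl, h⟩

theorem mn_le_iff : G.mn ≤ k ↔ ∃ s ≤ k, G.HasLayout s (k - s) := by
  constructor
  · intro h
    obtain ⟨s, q, hsq, hl⟩ : G.mn ∈ {m | ∃ s q, s + q = m ∧ G.HasLayout s q} :=
      Nat.sInf_mem ⟨#G.E + 0, #G.E, 0, rfl, G.hasLayout_card_zero⟩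
    exact ⟨s, by omega, hl.mono le_rfl (by omega)⟩
  · rintro ⟨s, hs, h⟩
    exact h.mn_le.trans (by omega)

theorem isKCritical_of (hblock : ∀ s ≤ k, ¬ G.HasLayout s (k - s))
    (herase : ∀ e ∈ G.E, ∃ s ≤ k, (G.erase e).HasLayout s (k - s)) : G.IsKCritical k :=
  ⟨not_le.1 fun h => let ⟨s, hs, hl⟩ := mn_le_iff.1 h; hblock s hs hl,
    fun e he => mn_le_iff.2 (herase e he)⟩

theorem isMatching_iff : G.IsMatching ↔ ∀ v, ∃ e, ∀ f, f ∈ G.E ∧ (f.1 = v ∨ f.2 = v) ↔ f = e := by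
  simp only [IsMatching, degree, card_eq_one, Finset.ext_iff, mem_filter, mem_singleton]

end OGraph

theorem Contains.hasLayout {G H : OGraph} {s q : ℕ} (hGH : Contains G H) (h : G.HasLayout s q) :
    H.HasLayout s q :=
  let ⟨_, hφ, hE⟩ := hGH; let ⟨_, hc⟩ := OGraph.hasLayout_iff.1 h; ⟨_, hc.comp_map hφ hE⟩

section Glue

variable {A B : OGraph} {φ : Fin A.n ↪o Fin n} {ψ : Fin B.n ↪o Fin n} {s q : ℕ}

def glue (A B : OGraph) (φ : Fin A.n ↪o Fin n) (ψ : Fin B.n ↪o Fin n) : OGraph where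
  n := n
  E := A.E.image (Prod.map φ φ) ∪ B.E.image (Prod.map ψ ψ)
  lt_of_mem e he := by
    rcases mem_union.1 he with he | he <;> obtain ⟨a, ha, rfl⟩ := mem_image.1 he
    · exact φ.lt_iff_lt.2 (A.lt_of_mem a ha)
    · exact ψ.lt_iff_lt.2 (B.lt_of_mem a ha)

theorem mem_glue {f : Fin n × Fin n} : f ∈ (glue A B φ ψ).E ↔
    (∃ e ∈ A.E, Prod.map φ φ e = f) ∨ ∃ e ∈ B.E, Prod.map ψ ψ e = f :=
  mem_union.trans (or_congr mem_image mem_image)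

theorem map_mem_glue_left {e : Fin A.n × Fin A.n} (he : e ∈ A.E) :
    Prod.map φ φ e ∈ (glue A B φ ψ).E :=
  mem_glue.2 (Or.inl ⟨e, he, rfl⟩)

theorem map_mem_glue_right {e : Fin B.n × Fin B.n} (he : e ∈ B.E) :
    Prod.map ψ ψ e ∈ (glue A B φ ψ).E :=
  mem_glue.2 (Or.inr ⟨e, he, rfl⟩)

theorem contains_glue_left : Contains (glue A B φ ψ) A :=
  ⟨φ, φ.strictMono, fun _ he => map_mem_glue_left he⟩

theorem contains_glue_right : Contains (glue A B φ ψ) B :=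
  ⟨ψ, ψ.strictMono, fun _ he => map_mem_glue_right he⟩

theorem contains_glue_erase_left {e : Fin A.n × Fin A.n} :
    Contains (glue (A.erase e) B φ ψ) ((glue A B φ ψ).erase (Prod.map φ φ e)) := by
  refine ⟨id, strictMono_id, fun f hf => ?_⟩
  obtain ⟨hfe, hf⟩ := mem_erase.1 hf
  rcases mem_glue.1 hf with ⟨a, ha, rfl⟩ | ⟨b, hb, rfl⟩
  · exact map_mem_glue_left (mem_erase.2 ⟨by rintro rfl; exact hfe rfl, ha⟩)
  · exact map_mem_glue_right hb

theorem contains_glue_erase_right {e : Fin B.n × Fin B.n} :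
    Contains (glue A (B.erase e) φ ψ) ((glue A B φ ψ).erase (Prod.map ψ ψ e)) := by
  refine ⟨id, strictMono_id, fun f hf => ?_⟩
  obtain ⟨hfe, hf⟩ := mem_erase.1 hf
  rcases mem_glue.1 hf with ⟨a, ha, rfl⟩ | ⟨b, hb, rfl⟩
  · exact map_mem_glue_left ha
  · exact map_mem_glue_right (mem_erase.2 ⟨by rintro rfl; exact hfe rfl, hb⟩)

theorem degree_glue_left (hdisj : ∀ a b, φ a ≠ ψ b) (a : Fin A.n) :
    (glue A B φ ψ).degree (φ a) = A.degree a := by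
  have hB : (B.E.image (Prod.map ψ ψ)).filter (fun e => e.1 = φ a ∨ e.2 = φ a) = ∅ := by
    refine filter_eq_empty_iff.2 fun f hf => ?_
    obtain ⟨b, -, rfl⟩ := mem_image.1 hf
    exact not_or.2 ⟨(hdisj a b.1).symm, (hdisj a b.2).symm⟩
  show #((A.E.image (Prod.map φ φ) ∪ B.E.image (Prod.map ψ ψ)).filter
    fun e => e.1 = φ a ∨ e.2 = φ a) = #(A.E.filter fun e => e.1 = a ∨ e.2 = a)
  simp only [filter_union, hB, union_empty, filter_image, Prod.map_fst, Prod.map_snd,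
    φ.eq_iff_eq]
  exact card_image_of_injective _ (φ.injective.prodMap φ.injective)

theorem degree_glue_right (hdisj : ∀ a b, φ a ≠ ψ b) (b : Fin B.n) :
    (glue A B φ ψ).degree (ψ b) = B.degree b := by
  have hA : (A.E.image (Prod.map φ φ)).filter (fun e => e.1 = ψ b ∨ e.2 = ψ b) = ∅ := by
    refine filter_eq_empty_iff.2 fun f hf => ?_
    obtain ⟨a, -, rfl⟩ := mem_image.1 hf
    exact not_or.2 ⟨hdisj a.1 b, hdisj a.2 b⟩
  show #((A.E.image (Prod.map φ φ) ∪ B.E.image (Prod.map ψ ψ)).filter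
    fun e => e.1 = ψ b ∨ e.2 = ψ b) = #(B.E.filter fun e => e.1 = b ∨ e.2 = b)
  simp only [filter_union, hA, empty_union, filter_image, Prod.map_fst, Prod.map_snd,
    ψ.eq_iff_eq]
  exact card_image_of_injective _ (ψ.injective.prodMap ψ.injective)

theorem glue_isMatching (hA : A.IsMatching) (hB : B.IsMatching)
    (hcover : ∀ v, (∃ a, φ a = v) ∨ ∃ b, ψ b = v) (hdisj : ∀ a b, φ a ≠ ψ b) :
    (glue A B φ ψ).IsMatching := by
  intro v
  rcases hcover v with ⟨a, rfl⟩ | ⟨b, rfl⟩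
  · exact (degree_glue_left hdisj a).trans (hA a)
  · exact (degree_glue_right hdisj b).trans (hB b)

theorem glue_hasLayout (hdisj : ∀ a b, φ a ≠ ψ b) {cA cB : _ → ℕ} (hA : IsLayout s q A.E cA)
    (hB : IsLayout s q B.E cB)
    (hAB : ∀ e ∈ A.E, ∀ f ∈ B.E, cA e = cB f →
      (cA e < s → ¬ Cross (Prod.map φ φ e) (Prod.map ψ ψ f)) ∧
        (s ≤ cA e → ¬ Nest (Prod.map φ φ e) (Prod.map ψ ψ f))) :
    (glue A B φ ψ).HasLayout s q := by
  set c := extend (Prod.map φ φ) cA (extend (Prod.map ψ ψ) cB fun _ => 0) with hc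
  have hcA : ∀ e, c (Prod.map φ φ e) = cA e :=
    (φ.injective.prodMap φ.injective).extend_apply _ _
  have hcB : ∀ f, c (Prod.map ψ ψ f) = cB f := fun f => by
    rw [hc, extend_apply' _ _ _ fun ⟨e, he⟩ => hdisj e.1 f.1 (congrArg Prod.fst he),
      (ψ.injective.prodMap ψ.injective).extend_apply]
  refine ⟨c, fun e he => ?_, fun e he f hf hef => ?_⟩
  · rcases mem_glue.1 he with ⟨a, ha, rfl⟩ | ⟨b, hb, rfl⟩
    · exact hcA a ▸ hA.1 a ha
    · exact hcB b ▸ hB.1 b hb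
  rcases mem_glue.1 he with ⟨a, ha, rfl⟩ | ⟨b, hb, rfl⟩ <;>
    rcases mem_glue.1 hf with ⟨a', ha', rfl⟩ | ⟨b', hb', rfl⟩ <;>
    simp only [hcA, hcB] at hef ⊢
  · obtain ⟨hcross, hnest⟩ := hA.2 a ha a' ha' hef
    exact ⟨fun hs h => hcross hs ((cross_map_iff φ.strictMono).1 h),
      fun hs h => hnest hs ((nest_map_iff φ.strictMono).1 h)⟩
  · exact hAB a ha b' hb' hef
  · obtain ⟨hcross, hnest⟩ := hAB a' ha' b hb hef.symm
    exact ⟨fun hs h => hcross (hef ▸ hs) h.symm, fun hs h => hnest (hef ▸ hs) h.symm⟩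
  · obtain ⟨hcross, hnest⟩ := hB.2 b hb b' hb' hef
    exact ⟨fun hs h => hcross hs ((cross_map_iff ψ.strictMono).1 h),
      fun hs h => hnest hs ((nest_map_iff ψ.strictMono).1 h)⟩

theorem glue_hasLayout_of_nest (hdisj : ∀ a b, φ a ≠ ψ b)
    (hnest : ∀ e ∈ A.E, ∀ f ∈ B.E, Nest (Prod.map φ φ e) (Prod.map ψ ψ f)) {cA cB : _ → ℕ}
    (hA : IsLayout s q A.E cA) (hB : IsLayout s q B.E cB)
    (hstack : ∀ e ∈ A.E, ∀ f ∈ B.E, cA e = cB f → cA e < s) :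
    (glue A B φ ψ).HasLayout s q :=
  glue_hasLayout hdisj hA hB fun e he f hf hef =>
    ⟨fun _ => (hnest e he f hf).not_cross, fun hs => absurd (hstack e he f hf hef) (not_lt.2 hs)⟩

end Glue

abbrev ofRel (n : ℕ) (r : ℕ → ℕ → Prop) [DecidableRel r] : OGraph where
  n := n
  E := univ.filter fun e => e.1 < e.2 ∧ r e.1 e.2
  lt_of_mem _ he := (mem_filter.1 he).2.1

theorem mem_ofRel {r : ℕ → ℕ → Prop} [DecidableRel r] {e : Fin n × Fin n} :
    e ∈ (ofRel n r).E ↔ e.1 < e.2 ∧ r e.1 e.2 := by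
  simp [ofRel]

abbrev twist (m : ℕ) : OGraph := ofRel (m + m) fun u v => v = u + m

theorem mem_twist {e : Fin (m + m) × Fin (m + m)} : e ∈ (twist m).E ↔ (e.2 : ℕ) = e.1 + m := by
  have := e.1.isLt
  rw [mem_ofRel, Fin.lt_def]
  omega

theorem twist_isMatching (m : ℕ) : (twist m).IsMatching := by
  rw [OGraph.isMatching_iff]
  intro v
  have hv : (v : ℕ) < m + m := v.isLt
  have hn : (twist m).n = m + m := rfl
  refine ⟨if h : (v : ℕ) < m then (v, ⟨v + m, by omega⟩) else (⟨v - m, by omega⟩, v), fun f => ?_⟩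
  rw [mem_twist]
  split_ifs <;> simp only [Prod.ext_iff, Fin.ext_iff] <;> omega

theorem cross_of_mem_twist {e f : Fin (m + m) × Fin (m + m)} (he : e ∈ (twist m).E)
    (hf : f ∈ (twist m).E) (hef : e ≠ f) : Cross e f := by
  rw [mem_twist] at he hf
  have : (e.1 : ℕ) ≠ f.1 := fun h => hef (Prod.ext (Fin.ext h) (Fin.ext (by omega)))
  have := e.2.isLt; have := f.2.isLt
  simp only [Cross, Fin.lt_def]
  omega

theorem not_nest_of_mem_twist {e f : Fin (m + m) × Fin (m + m)} (he : e ∈ (twist m).E)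
    (hf : f ∈ (twist m).E) : ¬ Nest e f := by
  by_cases hef : e = f
  · exact hef ▸ nest_irrefl e
  · exact (cross_of_mem_twist he hf hef).not_nest

theorem twist_hasLayout_stacks (m : ℕ) : (twist m).HasLayout m 0 := by
  refine ⟨fun e => e.1, IsLayout.of_injOn (fun e he f hf hef => ?_) (fun e he => ?_)⟩
  · rw [mem_coe, mem_twist] at he hf
    exact Prod.ext (Fin.ext hef) (Fin.ext (by simp only at hef; omega))
  · rw [mem_twist] at he
    have := e.2.isLt
    simp only; omega

theorem twist_erase_hasLayout {e : Fin (m + 1 + (m + 1)) × Fin (m + 1 + (m + 1))}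
    (he : e ∈ (twist (m + 1)).E) : ((twist (m + 1)).erase e).HasLayout m 0 := by
  replace he := mem_twist.1 he
  have key : ∀ f ∈ ((twist (m + 1)).erase e).E, (f.2 : ℕ) = f.1 + (m + 1) ∧ (f.1 : ℕ) ≠ e.1 := by
    intro f hf
    obtain ⟨hfe, hf⟩ := OGraph.mem_erase.1 hf
    replace hf := mem_twist.1 hf
    exact ⟨hf, fun h => hfe (Prod.ext (Fin.ext h) (Fin.ext (by omega)))⟩
  refine ⟨fun f => if (f.1 : ℕ) < e.1 then f.1 else f.1 - 1,
    IsLayout.of_injOn (fun f hf g hg hfg => ?_) (fun f hf => ?_)⟩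
  · have := key f hf; have := key g hg
    have hfg : (f.1 : ℕ) = g.1 := by split_ifs at hfg <;> omega
    exact Prod.ext (Fin.ext hfg) (Fin.ext (by omega))
  · have := key f hf
    have : (f.2 : ℕ) < m + 1 + (m + 1) := f.2.isLt
    split_ifs <;> omega

theorem twist_hasLayout_queue {s q : ℕ} (hq : 0 < q) : (twist m).HasLayout s q :=
  ⟨_, IsLayout.of_forall_not_nest (fun _ he _ hf => not_nest_of_mem_twist he hf) le_rfl
    (by omega : s < s + q)⟩

theorem twist_not_hasLayout {s : ℕ} (hs : s < m) : ¬ (twist m).HasLayout s 0 := by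
  rintro ⟨c, hc⟩
  let edge : Fin m → Fin (m + m) × Fin (m + m) := fun i => (⟨i, by omega⟩, ⟨i + m, by omega⟩)
  have hmem : ∀ i, edge i ∈ (twist m).E := fun i => mem_twist.2 rfl
  obtain ⟨i, j, hij, hcij⟩ := Fintype.exists_ne_map_eq_of_card_lt
    (fun i => (⟨c (edge i), hc.1 _ (hmem i)⟩ : Fin (s + 0))) (by simpa using hs)
  have hne : edge i ≠ edge j := fun h => hij (Fin.ext (by simpa [edge] using congrArg (·.1.val) h))
  exact (hc.2 _ (hmem i) _ (hmem j) (congrArg Fin.val hcij)).1 (hc.1 _ (hmem i))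
    (cross_of_mem_twist (hmem i) (hmem j) hne)

section Ring

def outerEmb (w m : ℕ) : Fin (w + w) ↪o Fin (w + m + w) :=
  OrderEmbedding.ofStrictMono
    (fun i => ⟨if (i : ℕ) < w then (i : ℕ) else i + m, by split_ifs <;> omega⟩) fun i j hij => by
      simp only [Fin.lt_def] at hij ⊢
      split_ifs <;> omega

def innerEmb (w m : ℕ) : Fin m ↪o Fin (w + m + w) :=
  (Fin.natAddOrderEmb w).trans (Fin.castAddOrderEmb w)

theorem outerEmb_val (w m : ℕ) (i : Fin (w + w)) :
    (outerEmb w m i : ℕ) = if (i : ℕ) < w then (i : ℕ) else i + m := rfl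

theorem innerEmb_val (w m : ℕ) (i : Fin m) : (innerEmb w m i : ℕ) = w + i := rfl

theorem outerEmb_ne_innerEmb (w m : ℕ) (i : Fin (w + w)) (j : Fin m) :
    outerEmb w m i ≠ innerEmb w m j := by
  rw [Ne, Fin.ext_iff, outerEmb_val, innerEmb_val]
  have := i.isLt; have := j.isLt
  split_ifs <;> omega

theorem nest_outerEmb_innerEmb {w m : ℕ} {e : Fin (w + w) × Fin (w + w)}
    (he : e ∈ (twist w).E) (f : Fin m × Fin m) :
    Nest (Prod.map (outerEmb w m) (outerEmb w m) e) (Prod.map (innerEmb w m) (innerEmb w m) f) := by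
  replace he := mem_twist.1 he
  have := f.1.isLt; have := f.2.isLt; have := e.2.isLt
  simp only [Nest, Fin.lt_def, Prod.map_fst, Prod.map_snd, outerEmb_val, innerEmb_val]
  split_ifs <;> omega

def ring (w : ℕ) (C : OGraph) : OGraph := glue (twist w) C (outerEmb w C.n) (innerEmb w C.n)

variable {w s q : ℕ} {C : OGraph}

theorem ring_isMatching (hC : C.IsMatching) : (ring w C).IsMatching := by
  refine glue_isMatching (twist_isMatching w) hC (fun v => ?_) (outerEmb_ne_innerEmb w C.n)
  have hv : (v : ℕ) < w + C.n + w := v.isLt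
  have hn : (twist w).n = w + w := rfl
  by_cases h₁ : (v : ℕ) < w
  · exact Or.inl ⟨⟨v, by omega⟩, Fin.ext (by simp [outerEmb_val, h₁])⟩
  by_cases h₂ : (v : ℕ) < w + C.n
  · exact Or.inr ⟨⟨v - w, by omega⟩, Fin.ext (by rw [innerEmb_val, Fin.val_mk]; omega)⟩
  · refine Or.inl ⟨⟨v - C.n, by omega⟩, Fin.ext ?_⟩
    rw [outerEmb_val, Fin.val_mk]
    split_ifs <;> omega

theorem ring_n (w : ℕ) (C : OGraph) : (ring w C).n = w + C.n + w := rfl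

theorem ring_hasLayout_stacks (hC : C.HasLayout w 0) : (ring w C).HasLayout w 0 := by
  obtain ⟨cT, hT⟩ := OGraph.hasLayout_iff.1 (twist_hasLayout_stacks w)
  obtain ⟨cC, hC⟩ := OGraph.hasLayout_iff.1 hC
  exact glue_hasLayout_of_nest (outerEmb_ne_innerEmb w C.n)
    (fun e he f _ => nest_outerEmb_innerEmb he f) hT hC fun e he _ _ _ => by simpa using hT.1 e he

theorem ring_hasLayout_queue (hC : C.HasLayout s q) : (ring w C).HasLayout s (q + 1) := by
  obtain ⟨cC, hC⟩ := OGraph.hasLayout_iff.1 hC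
  have hT : IsLayout s (q + 1) (twist w).E fun _ => s + q :=
    .of_forall_not_nest (fun _ he _ hf => not_nest_of_mem_twist he hf) (by omega) (by omega)
  refine glue_hasLayout_of_nest (outerEmb_ne_innerEmb w C.n)
    (fun e he f _ => nest_outerEmb_innerEmb he f) hT (hC.mono le_rfl (Nat.le_succ q))
    fun e _ f hf hef => absurd hef ?_
  have := hC.1 f hf
  simp only [comp_apply]
  split_ifs <;> omega

theorem ring_not_hasLayout (hC : ¬ C.HasLayout s q) : ¬ (ring (s + 1) C).HasLayout s (q + 1) := by
  intro h
  obtain ⟨c, hc⟩ := OGraph.hasLayout_iff.1 h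
  obtain ⟨e, he, hes⟩ :
      ∃ e ∈ (twist (s + 1)).E, s ≤ c (Prod.map (outerEmb _ C.n) (outerEmb _ C.n) e) := by
    by_contra! hstack
    have hT := hc.comp_map (outerEmb (s + 1) C.n).strictMono fun e he => map_mem_glue_left he
    exact twist_not_hasLayout (Nat.lt_succ_self s) ⟨_, fun e he => by simpa using hstack e he,
      fun e he f hf hef => ⟨(hT.2 e he f hf hef).1, fun hs => absurd (hstack e he) (not_lt.2 hs)⟩⟩
  have hfree : ∀ f ∈ C.E, (c ∘ Prod.map (innerEmb _ C.n) (innerEmb _ C.n)) f ≠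
      c (Prod.map (outerEmb _ C.n) (outerEmb _ C.n) e) := fun f hf hef =>
    (hc.2 _ (map_mem_glue_right hf) _ (map_mem_glue_left he) hef).2 (hes.trans_eq hef.symm)
      (nest_outerEmb_innerEmb he f).symm
  have hC' := hc.comp_map (innerEmb (s + 1) C.n).strictMono fun f hf => map_mem_glue_right hf
  exact hC ⟨_, hC'.remove_queue hes (hc.1 _ (map_mem_glue_left he)) hfree⟩

theorem isSQCritical_ring (h : C.IsSQCritical s q) :
    (ring (s + 1) C).IsSQCritical s (q + 1) := by
  refine ⟨ring_not_hasLayout h.1, fun e he => ?_⟩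
  rcases mem_glue.1 he with ⟨a, ha, rfl⟩ | ⟨b, hb, rfl⟩
  · refine contains_glue_erase_left.hasLayout ?_
    obtain ⟨cT, hT⟩ := OGraph.hasLayout_iff.1 (twist_erase_hasLayout ha)
    obtain ⟨cC, hC⟩ := OGraph.hasLayout_iff.1 h.hasLayout_succ
    refine glue_hasLayout_of_nest (outerEmb_ne_innerEmb _ C.n)
      (fun e he f _ => nest_outerEmb_innerEmb (OGraph.mem_erase.1 he).2 f)
      (hT.mono le_rfl (Nat.zero_le _)) hC fun e he _ _ _ => ?_
    have := hT.1 e he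
    simp only [comp_apply]
    split_ifs <;> omega
  · exact contains_glue_erase_right.hasLayout (ring_hasLayout_queue (h.2 b hb))

end Ring

section IterateRing

variable {w s q g : ℕ} {C : OGraph}

theorem iterate_ring_isMatching (hC : C.IsMatching) : ((ring w)^[g] C).IsMatching := by
  induction g with
  | zero => exact hC
  | succ g ih => rw [iterate_succ_apply']; exact ring_isMatching ih

theorem le_iterate_ring_n : C.n ≤ ((ring w)^[g] C).n := by
  induction g with
  | zero => exact le_rfl
  | succ g ih => rw [iterate_succ_apply', ring_n]; omega

theorem iterate_ring_hasLayout_stacks (hC : C.HasLayout w 0) : ((ring w)^[g] C).HasLayout w 0 := by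
  induction g with
  | zero => exact hC
  | succ g ih => rw [iterate_succ_apply']; exact ring_hasLayout_stacks ih

theorem iterate_ring_hasLayout_queue (hC : C.HasLayout s q) :
    ((ring w)^[g] C).HasLayout s (q + g) := by
  induction g with
  | zero => exact hC
  | succ g ih => rw [iterate_succ_apply']; exact ring_hasLayout_queue ih

theorem isSQCritical_iterate_ring (h : C.IsSQCritical s q) :
    ((ring (s + 1))^[g] C).IsSQCritical s (q + g) := by
  induction g with
  | zero => exact h
  | succ g ih => rw [iterate_succ_apply']; exact isSQCritical_ring ih

end IterateRing

def IsCriticalOn (k : ℕ) (S : Finset ℕ) (G : OGraph) : Prop :=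
  (∀ s ≤ k, ¬ G.HasLayout s (k - s) ↔ s ∈ S) ∧
    ∀ e ∈ G.E, ∃ s ∈ S, s ≤ k ∧ (G.erase e).HasLayout s (k - s)

theorem IsCriticalOn.isKCritical {k : ℕ} {G : OGraph} (h : IsCriticalOn k (range (k + 1)) G) :
    G.IsKCritical k :=
  OGraph.isKCritical_of (fun s hs => (h.1 s hs).2 (mem_range.2 (by omega)))
    fun e he => let ⟨s, _, hs, hl⟩ := h.2 e he; ⟨s, hs, hl⟩

structure IsCore (C : OGraph) (s : ℕ) : Prop where
  isSQCritical : C.IsSQCritical s 0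
  hasLayout_stacks : C.HasLayout (s + 1) 0
  hasLayout_mixed : ∀ s' < s, C.HasLayout s' (s - s')

theorem IsCore.isCriticalOn_iterate_ring {C : OGraph} {s k : ℕ} (hC : IsCore C s) (hs : s ≤ k) :
    IsCriticalOn k {s} ((ring (s + 1))^[k - s] C) := by
  have hcrit := isSQCritical_iterate_ring (g := k - s) hC.isSQCritical
  rw [zero_add] at hcrit
  refine ⟨fun s₀ hs₀ => ⟨fun hno => mem_singleton.2 (by_contra fun hne => hno ?_), ?_⟩,
    fun e he => ⟨s, mem_singleton_self s, hs, hcrit.2 e he⟩⟩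
  · rcases Nat.lt_or_gt_of_ne hne with hlt | hgt
    · exact (iterate_ring_hasLayout_queue (hC.hasLayout_mixed s₀ hlt)).mono le_rfl (by omega)
    · exact (iterate_ring_hasLayout_stacks hC.hasLayout_stacks).mono hgt (Nat.zero_le _)
  · intro hs₀
    rw [mem_singleton.1 hs₀]
    exact hcrit.1

section Append

variable {A B : OGraph} {k : ℕ} {S T : Finset ℕ}

def append (A B : OGraph) : OGraph := glue A B (Fin.castAddOrderEmb B.n) (Fin.natAddOrderEmb A.n)

theorem append_n (A B : OGraph) : (append A B).n = A.n + B.n := rfl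

theorem castAdd_ne_natAdd (a : Fin A.n) (b : Fin B.n) :
    Fin.castAddOrderEmb B.n a ≠ Fin.natAddOrderEmb A.n b := by
  simp only [Ne, Fin.ext_iff, Fin.castAddOrderEmb_apply, Fin.natAddOrderEmb_apply,
    Fin.val_castAdd, Fin.val_natAdd]
  omega

theorem append_isMatching (hA : A.IsMatching) (hB : B.IsMatching) : (append A B).IsMatching :=
  glue_isMatching hA hB (fun v => v.addCases (fun a => .inl ⟨a, rfl⟩) fun b => .inr ⟨b, rfl⟩)
    castAdd_ne_natAdd

theorem append_hasLayout {s q : ℕ} (hA : A.HasLayout s q) (hB : B.HasLayout s q) :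
    (append A B).HasLayout s q := by
  obtain ⟨cA, hA⟩ := OGraph.hasLayout_iff.1 hA
  obtain ⟨cB, hB⟩ := OGraph.hasLayout_iff.1 hB
  refine glue_hasLayout castAdd_ne_natAdd hA hB fun e _ f _ _ => ⟨fun _ => ?_, fun _ => ?_⟩ <;>
  · have := e.1.isLt; have := e.2.isLt
    simp only [Cross, Nest, Fin.lt_def, Prod.map_fst, Prod.map_snd, Fin.castAddOrderEmb_apply,
      Fin.natAddOrderEmb_apply, Fin.val_castAdd, Fin.val_natAdd]
    omega

theorem IsCriticalOn.append (hA : IsCriticalOn k S A) (hB : IsCriticalOn k T B)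
    (hST : Disjoint S T) : IsCriticalOn k (S ∪ T) (append A B) := by
  refine ⟨fun s hs => ?_, fun e he => ?_⟩
  · rw [mem_union, ← hA.1 s hs, ← hB.1 s hs, ← not_and_or]
    exact not_congr ⟨fun h => ⟨contains_glue_left.hasLayout h, contains_glue_right.hasLayout h⟩,
      fun h => append_hasLayout h.1 h.2⟩
  rcases mem_glue.1 he with ⟨a, ha, rfl⟩ | ⟨b, hb, rfl⟩
  · obtain ⟨s, hsS, hs, hl⟩ := hA.2 a ha
    have hB' : B.HasLayout s (k - s) :=
      not_not.1 fun h => disjoint_left.1 hST hsS ((hB.1 s hs).1 h)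
    exact ⟨s, mem_union_left T hsS, hs,
      contains_glue_erase_left.hasLayout (append_hasLayout hl hB')⟩
  · obtain ⟨s, hsT, hs, hl⟩ := hB.2 b hb
    have hA' : A.HasLayout s (k - s) :=
      not_not.1 fun h => disjoint_right.1 hST hsT ((hA.1 s hs).1 h)
    exact ⟨s, mem_union_right S hsT, hs,
      contains_glue_erase_right.hasLayout (append_hasLayout hA' hl)⟩

end Append

def chain (G : ℕ → OGraph) : ℕ → OGraph
  | 0 => G 0
  | s + 1 => append (G (s + 1)) (chain G s)

section Chain

variable {G : ℕ → OGraph}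

theorem chain_isMatching (hG : ∀ i, (G i).IsMatching) (s : ℕ) : (chain G s).IsMatching := by
  induction s with
  | zero => exact hG 0
  | succ s ih => exact append_isMatching (hG (s + 1)) ih

theorem le_chain_n {i s : ℕ} (hi : i ≤ s) : (G i).n ≤ (chain G s).n := by
  induction s with
  | zero => rw [Nat.le_zero.1 hi]; rfl
  | succ s ih =>
    rw [chain, append_n]
    rcases Nat.lt_or_ge i (s + 1) with h | h
    · have := ih (by omega); omega
    · rw [le_antisymm hi h]; omega

theorem isCriticalOn_chain {k : ℕ} (hG : ∀ i ≤ k, IsCriticalOn k {i} (G i)) {s : ℕ} (hs : s ≤ k) :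
    IsCriticalOn k (range (s + 1)) (chain G s) := by
  induction s with
  | zero => exact hG 0 (Nat.zero_le k)
  | succ s ih =>
    rw [Finset.range_add_one, insert_eq]
    exact (hG (s + 1) hs).append (ih (by omega)) (by simp)

end Chain

/-- Two stacks properly colour the crossing graph of their edges, which therefore contains no odd
cycle `e 0, e 1, …, e (2 * r)`. -/
theorem not_isLayout_of_odd_cycle {E : Finset (Fin n × Fin n)} {c : Fin n × Fin n → ℕ} {r : ℕ}
    (e : ℕ → Fin n × Fin n) (hmem : ∀ i ≤ 2 * r, e i ∈ E)
    (hcross : ∀ i < 2 * r, Cross (e i) (e (i + 1))) (hclose : Cross (e (2 * r)) (e 0)) :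
    ¬ IsLayout 2 0 E c := by
  intro hc
  have hlt : ∀ i ≤ 2 * r, c (e i) < 2 := fun i hi => hc.1 _ (hmem i hi)
  have hne : ∀ i < 2 * r, c (e i) ≠ c (e (i + 1)) := fun i hi h =>
    (hc.2 _ (hmem i hi.le) _ (hmem (i + 1) hi) h).1 (hlt i hi.le) (hcross i hi)
  have hparity : ∀ i ≤ 2 * r, c (e i) = (c (e 0) + i) % 2 := by
    intro i hi
    induction i with
    | zero => have := hlt 0 hi; omega
    | succ i ih =>
      have := ih (by omega); have := hne i (by omega)
      have := hlt (i + 1) hi; have := hlt i (by omega)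
      omega
  have h0 := hlt 0 (Nat.zero_le _)
  have hsame : c (e (2 * r)) = c (e 0) := by have := hparity (2 * r) le_rfl; omega
  exact (hc.2 _ (hmem _ le_rfl) _ (hmem 0 (Nat.zero_le _)) hsame).1 (hlt _ le_rfl) hclose

section OddCycle

variable {t : ℕ}

/-- The edges `(2 i, 2 i + 3)` for `i ≤ 2 t + 1`, each crossing the next, and the edge
`(1, 4 t + 4)`, which crosses the first and the last of them and nests the others: the crossing
graph is a cycle of length `2 t + 3`. -/
abbrev oddCycle (t : ℕ) : OGraph :=
  ofRel (4 * t + 6) fun u v => u % 2 = 0 ∧ v = u + 3 ∨ u = 1 ∧ v = 4 * t + 4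

theorem mem_oddCycle {e : Fin (4 * t + 6) × Fin (4 * t + 6)} : e ∈ (oddCycle t).E ↔
    (e.1 : ℕ) % 2 = 0 ∧ (e.2 : ℕ) = e.1 + 3 ∨ (e.1 : ℕ) = 1 ∧ (e.2 : ℕ) = 4 * t + 4 := by
  rw [mem_ofRel, Fin.lt_def]
  omega

theorem oddCycle_isMatching (t : ℕ) : (oddCycle t).IsMatching := by
  rw [OGraph.isMatching_iff]
  intro v
  have hv : (v : ℕ) < 4 * t + 6 := v.isLt
  have hn : (oddCycle t).n = 4 * t + 6 := rfl
  refine ⟨if h : (v : ℕ) = 1 ∨ (v : ℕ) = 4 * t + 4 then (⟨1, by omega⟩, ⟨4 * t + 4, by omega⟩)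
    else if h' : (v : ℕ) % 2 = 0 then (v, ⟨v + 3, by omega⟩) else (⟨v - 3, by omega⟩, v),
    fun f => ?_⟩
  rw [mem_oddCycle]
  split_ifs <;> simp only [Prod.ext_iff, Fin.ext_iff] <;> omega

theorem oddCycle_not_hasLayout (t : ℕ) : ¬ (oddCycle t).HasLayout 2 0 := by
  rintro ⟨c, hc⟩
  let e (i : ℕ) : Fin (4 * t + 6) × Fin (4 * t + 6) := if h : i ≤ 2 * t + 1 then
    (⟨2 * i, by omega⟩, ⟨2 * i + 3, by omega⟩) else (⟨1, by omega⟩, ⟨4 * t + 4, by omega⟩)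
  refine not_isLayout_of_odd_cycle (r := t + 1) e (fun i hi => ?_) (fun i hi => ?_) ?_ hc
  · rw [mem_oddCycle]
    simp only [e]
    split_ifs <;> simp
  · simp only [e, Cross, Fin.lt_def]
    split_ifs <;> simp only <;> omega
  · simp only [e, dif_neg (show ¬ 2 * (t + 1) ≤ 2 * t + 1 by omega),
      dif_pos (Nat.zero_le (2 * t + 1)), Cross, Fin.lt_def]
    omega

theorem oddCycle_erase_hasLayout {e : Fin (4 * t + 6) × Fin (4 * t + 6)}
    (he : e ∈ (oddCycle t).E) : ((oddCycle t).erase e).HasLayout 2 0 := by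
  replace he := mem_oddCycle.1 he
  have key : ∀ f ∈ ((oddCycle t).erase e).E, ((f.1 : ℕ) % 2 = 0 ∧ (f.2 : ℕ) = f.1 + 3 ∨
      (f.1 : ℕ) = 1 ∧ (f.2 : ℕ) = 4 * t + 4) ∧ (f.1 : ℕ) ≠ e.1 ∧ (f.2 : ℕ) < 4 * t + 6 := by
    intro f hf
    obtain ⟨hfe, hf⟩ := OGraph.mem_erase.1 hf
    have hf := mem_oddCycle.1 hf
    exact ⟨hf, fun h => hfe (Prod.ext (Fin.ext h) (Fin.ext (by omega))), f.2.isLt⟩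
  -- the position of an edge along the cycle, the chord coming last
  let pos (f : Fin (4 * t + 6) × Fin (4 * t + 6)) : ℕ :=
    if (f.1 : ℕ) = 1 then 2 * t + 2 else f.1 / 2
  -- colour alternately along the path that remains of the cycle, starting after `e`
  refine ⟨fun f => (if pos e < pos f then pos f - pos e - 1 else pos f + (2 * t + 2) - pos e) % 2,
    fun f _ => Nat.mod_lt _ two_pos, fun f hf g hg hfg =>
      ⟨fun _ hcross => ?_, fun h => absurd h (not_le.2 (Nat.mod_lt _ two_pos))⟩⟩
  have := key f hf; have := key g hg
  simp only [pos, Cross, Fin.lt_def] at hfg hcross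
  split_ifs at hfg <;> omega

def oddCycleChord (t : ℕ) : Fin (4 * t + 6) × Fin (4 * t + 6) :=
  (⟨1, by omega⟩, ⟨4 * t + 4, by omega⟩)

theorem oddCycleChord_mem (t : ℕ) : oddCycleChord t ∈ (oddCycle t).E :=
  mem_oddCycle.2 (Or.inr ⟨rfl, rfl⟩)

theorem oddCycle_erase_chord_hasLayout (t : ℕ) :
    ((oddCycle t).erase (oddCycleChord t)).HasLayout 0 1 := by
  have key : ∀ f ∈ ((oddCycle t).erase (oddCycleChord t)).E, (f.2 : ℕ) = f.1 + 3 := by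
    intro f hf
    obtain ⟨hfc, hf⟩ := OGraph.mem_erase.1 hf
    have hf := mem_oddCycle.1 hf
    have hc : ((oddCycleChord t).1 : ℕ) = 1 ∧ ((oddCycleChord t).2 : ℕ) = 4 * t + 4 := ⟨rfl, rfl⟩
    have : (f.1 : ℕ) ≠ 1 := fun h => hfc (Prod.ext (Fin.ext (by omega)) (Fin.ext (by omega)))
    omega
  refine ⟨_, IsLayout.of_forall_not_nest (fun f hf g hg => ?_) le_rfl zero_lt_one⟩
  have := key f hf; have := key g hg
  simp only [Nest, Fin.lt_def]
  omega

theorem isCore_oddCycle (t : ℕ) : IsCore (oddCycle t) 2 where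
  isSQCritical := ⟨oddCycle_not_hasLayout t, fun _ he => oddCycle_erase_hasLayout he⟩
  hasLayout_stacks :=
    (oddCycle_erase_hasLayout (oddCycleChord_mem t)).of_erase_stack (oddCycleChord_mem t)
  hasLayout_mixed s' hs' := by
    interval_cases s'
    · exact (oddCycle_erase_chord_hasLayout t).of_erase_queue (oddCycleChord_mem t)
    · exact (oddCycle_erase_chord_hasLayout t).of_erase_stack (oddCycleChord_mem t)

end OddCycle

theorem isCore_twist (s : ℕ) : IsCore (twist (s + 1)) s where
  isSQCritical := ⟨twist_not_hasLayout (Nat.lt_succ_self s), fun _ he => twist_erase_hasLayout he⟩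
  hasLayout_stacks := twist_hasLayout_stacks (s + 1)
  hasLayout_mixed _ hs' := twist_hasLayout_queue (by omega)

def gadgetCore (t s : ℕ) : OGraph := if s = 2 then oddCycle t else twist (s + 1)

theorem isCore_gadgetCore (t s : ℕ) : IsCore (gadgetCore t s) s := by
  unfold gadgetCore
  split_ifs with h
  · exact h ▸ isCore_oddCycle t
  · exact isCore_twist s

theorem gadgetCore_isMatching (t s : ℕ) : (gadgetCore t s).IsMatching := by
  unfold gadgetCore
  split_ifs
  · exact oddCycle_isMatching t
  · exact twist_isMatching (s + 1)

def criticalMatching (k t : ℕ) : OGraph :=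
  chain (fun s => (ring (s + 1))^[k - s] (gadgetCore t s)) k

theorem criticalMatching_isMatching (k t : ℕ) : (criticalMatching k t).IsMatching :=
  chain_isMatching (fun s => iterate_ring_isMatching (gadgetCore_isMatching t s)) k

theorem criticalMatching_isKCritical (k t : ℕ) : (criticalMatching k t).IsKCritical k :=
  (isCriticalOn_chain (fun s hs => (isCore_gadgetCore t s).isCriticalOn_iterate_ring hs)
    le_rfl).isKCritical

theorem lt_criticalMatching_n {k : ℕ} (hk : 2 ≤ k) (t : ℕ) : t < (criticalMatching k t).n :=
  calc t < (oddCycle t).n := show t < 4 * t + 6 by omega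
    _ = (gadgetCore t 2).n := by rw [gadgetCore, if_pos rfl]
    _ ≤ ((ring 3)^[k - 2] (gadgetCore t 2)).n := le_iterate_ring_n
    _ ≤ (criticalMatching k t).n :=
      le_chain_n (G := fun s => (ring (s + 1))^[k - s] (gadgetCore t s)) hk

/-- For every `k ≥ 2` and every `n`, there is a `k`-critical
ordered matching with more than `n` vertices; in particular there are
infinitely many `k`-critical ordered matchings. -/
theorem infinitely_many_k_critical_matchings (k : ℕ) (hk : 2 ≤ k) :
    (∀ n : ℕ, ∃ G : OGraph, G.IsMatching ∧ n < G.n ∧ G.IsKCritical k) ∧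
    {G : OGraph | G.IsMatching ∧ G.IsKCritical k}.Infinite := by
  have large : ∀ n : ℕ, ∃ G : OGraph, G.IsMatching ∧ n < G.n ∧ G.IsKCritical k := fun n =>
    ⟨_, criticalMatching_isMatching k n, lt_criticalMatching_n hk n,
      criticalMatching_isKCritical k n⟩
  refine ⟨large, Set.Infinite.of_image OGraph.n (Set.infinite_of_not_bddAbove ?_)⟩
  rintro ⟨N, hN⟩
  obtain ⟨G, hG, hN', hGk⟩ := large N
  exact (hN ⟨G, ⟨hG, hGk⟩, rfl⟩).not_gt hN'

end MixedLayouts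
end

section
/- For every integer s ≥ 2 and every n ≥ 3, there exists an (s,0)-critical ordered matching with at least n vertices. -/
/-!
Take `k = n s + 1` chords on `2k` points of a circle, the `i`-th joining `2i` and `2i + 2s - 1`:
two chords cross exactly when their indices are at cyclic distance less than `s`. A stack is
then a set of indices pairwise at cyclic distance at least `s`, so it has at most `⌊k / s⌋`
elements, and `s` stacks hold at most `s ⌊k / s⌋ = k - 1` chords. After deleting one chord,
read the other indices cyclically starting after the gap, as positions `0, …, k - 2`; colouring
position `p` by `p mod s` gives `s` stacks, because `s ∣ k - 1`.
-/

namespace MixedLayouts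

open Finset

theorem hasLayout_iff_of_edges_eq_image {G : OGraph} {ι : Type*} {f : ι → Fin G.n × Fin G.n}
    {S : Finset ι} (hE : G.E = S.image f) (s q : ℕ) :
    G.HasLayout s q ↔ ∃ c : ι → ℕ, (∀ i ∈ S, c i < s + q) ∧
      ∀ i ∈ S, ∀ j ∈ S, c i = c j →
        (c i < s → ¬ Cross (f i) (f j)) ∧ (s ≤ c i → ¬ Nest (f i) (f j)) := by
  classical
  constructor
  · rintro ⟨c, hlt, hpage⟩
    have hf : ∀ i ∈ S, f i ∈ G.E := fun i hi => hE ▸ mem_image_of_mem f hi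
    exact ⟨c ∘ f, fun i hi => hlt _ (hf i hi), fun i hi j hj => hpage _ (hf i hi) _ (hf j hj)⟩
  · rintro ⟨c, hlt, hpage⟩
    refine ⟨fun e => if h : ∃ i ∈ S, f i = e then c h.choose else 0, ?_, ?_⟩
    · intro e he
      have h : ∃ i ∈ S, f i = e := by simpa [hE] using he
      simpa [dif_pos h] using hlt _ h.choose_spec.1
    · intro e he e' he'
      have h : ∃ i ∈ S, f i = e := by simpa [hE] using he
      have h' : ∃ i ∈ S, f i = e' := by simpa [hE] using he'
      simp only [dif_pos h, dif_pos h']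
      have hpage' := hpage _ h.choose_spec.1 _ h'.choose_spec.1
      rwa [h.choose_spec.2, h'.choose_spec.2] at hpage'

theorem isMatching_of_existsUnique {G : OGraph} {ι : Type*} [Fintype ι]
    {f : ι → Fin G.n × Fin G.n} (hE : G.E = univ.image f)
    (hf : ∀ v, ∃! i, (f i).1 = v ∨ (f i).2 = v) : G.IsMatching := by
  classical
  intro v
  obtain ⟨i, hi, huniq⟩ := hf v
  rw [OGraph.degree, card_eq_one]
  refine ⟨f i, ?_⟩
  ext e
  simp only [hE, mem_filter, mem_image, mem_univ, true_and, mem_singleton]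
  constructor
  · rintro ⟨⟨j, rfl⟩, hj⟩
    rw [huniq j hj]
  · rintro rfl
    exact ⟨⟨i, rfl⟩, hi⟩

def chordLo (s k i : ℕ) : ℕ :=
  if 2 * i + (2 * s - 1) < 2 * k then 2 * i else 2 * i + (2 * s - 1) - 2 * k

def chordHi (s k i : ℕ) : ℕ :=
  if 2 * i + (2 * s - 1) < 2 * k then 2 * i + (2 * s - 1) else 2 * i

/-- The `i`-th chord joins `2i` and `2i + 2s - 1 (mod 2k)`, with its endpoints in increasing
order. -/
def chord {s k : ℕ} (hsk : s ≤ k) (i : Fin k) : Fin (2 * k) × Fin (2 * k) :=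
  (⟨chordLo s k i, by have := i.isLt; unfold chordLo; split_ifs <;> omega⟩,
   ⟨chordHi s k i, by have := i.isLt; unfold chordHi; split_ifs <;> omega⟩)

def cyclicMatching (s k : ℕ) (hs : 0 < s) (hsk : s ≤ k) : OGraph where
  n := 2 * k
  E := univ.image (chord hsk)
  lt_of_mem := by
    simp only [mem_image, mem_univ, true_and, forall_exists_index, forall_apply_eq_imp_iff]
    intro i
    have := i.isLt
    simp only [chord, Fin.mk_lt_mk, chordLo, chordHi]
    split_ifs <;> omega

/-- The distance between `x` and `y` in the cycle `ℤ/k`; meaningful for `x y < k`. -/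
def cycDist (k x y : ℕ) : ℕ := min (Nat.dist x y) (k - Nat.dist x y)

theorem cycDist_comm (k x y : ℕ) : cycDist k x y = cycDist k y x := by
  rw [cycDist, cycDist, Nat.dist_comm]

theorem cycDist_add_mod {k x y c : ℕ} (hx : x < k) (hy : y < k) (hc : c < k) :
    cycDist k ((x + c) % k) ((y + c) % k) = cycDist k x y := by
  simp only [cycDist, Nat.dist, Nat.add_mod_eq_ite, Nat.mod_eq_of_lt hx, Nat.mod_eq_of_lt hy,
    Nat.mod_eq_of_lt hc]
  split_ifs <;> omega

/-- The arcs `{x, x + 1, …, x + s - 1}` of the points `x ∈ D` are pairwise disjoint. -/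
theorem card_mul_le_of_le_cycDist {s k : ℕ} (hsk : s ≤ k) {D : Finset (Fin k)}
    (hD : ∀ x ∈ D, ∀ y ∈ D, x ≠ y → s ≤ cycDist k x y) : #D * s ≤ k := by
  have hinj : ((D ×ˢ range s : Finset (Fin k × ℕ)) : Set (Fin k × ℕ)).InjOn
      fun p => (p.1 + p.2 : ℕ) % k := by
    rintro ⟨x, a⟩ hxa ⟨y, b⟩ hyb hxy
    simp only [coe_product, coe_range, Set.mem_prod, mem_coe, Set.mem_Iio] at hxa hyb
    have := x.isLt; have := y.isLt
    simp only [Nat.add_mod_eq_ite, Nat.mod_eq_of_lt x.isLt, Nat.mod_eq_of_lt y.isLt,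
      Nat.mod_eq_of_lt (hxa.2.trans_le hsk), Nat.mod_eq_of_lt (hyb.2.trans_le hsk)] at hxy
    by_cases hxy' : x = y
    · subst hxy'
      simp only [Prod.mk.injEq, true_and]
      split_ifs at hxy <;> omega
    · have hsep := hD x hxa.1 y hyb.1 hxy'
      have := Fin.val_ne_of_ne hxy'
      simp only [cycDist, Nat.dist] at hsep
      split_ifs at hxy <;> omega
  simpa using card_le_card_of_injOn _ (fun p _ => mem_range.2 (Nat.mod_lt _ p.1.pos)) hinj

theorem existsUnique_chord_endpoint {s k : ℕ} (hs : 0 < s) (hsk : s ≤ k) (v : Fin (2 * k)) :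
    ∃! i, (chord hsk i).1 = v ∨ (chord hsk i).2 = v := by
  have hv := v.isLt
  simp only [chord, Fin.ext_iff, chordLo, chordHi]
  refine existsUnique_of_exists_of_unique ?_ ?_
  · by_cases hpar : v.val % 2 = 0
    · exact ⟨⟨v / 2, by omega⟩, by dsimp only; split_ifs <;> omega⟩
    · by_cases hwrap : 2 * s - 1 ≤ v.val
      · exact ⟨⟨(v - (2 * s - 1)) / 2, by omega⟩, by dsimp only; split_ifs <;> omega⟩
      · exact ⟨⟨(v + 2 * k - (2 * s - 1)) / 2, by omega⟩, by dsimp only; split_ifs <;> omega⟩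
  · intro i j hi hj
    have := i.isLt; have := j.isLt
    ext
    split_ifs at hi hj <;> omega

theorem chord_injective {s k : ℕ} (hs : 0 < s) (hsk : s ≤ k) :
    Function.Injective (chord hsk) := fun i j hij =>
  (existsUnique_chord_endpoint hs hsk (chord hsk i).1).unique (Or.inl rfl) (Or.inl (by rw [hij]))

theorem cross_chord_iff {s k : ℕ} (hsk : s ≤ k) (h2s : 2 * s ≤ k + 1) {i j : Fin k}
    (hij : i ≠ j) : Cross (chord hsk i) (chord hsk j) ↔ cycDist k i j < s := by
  have := i.isLt; have := j.isLt
  have := Fin.val_ne_of_ne hij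
  simp only [Cross, chord, Fin.mk_lt_mk, cycDist, Nat.dist, chordLo, chordHi]
  split_ifs <;> omega

/-- `b - a` is a positive multiple of `s` below `k - 1`, which is itself a multiple of `s`. -/
theorem le_cycDist_of_modEq {s k a b : ℕ} (hk : k % s = 1) (ha : a + 1 < k) (hb : b + 1 < k)
    (hab : a ≠ b) (h : a ≡ b [MOD s]) : s ≤ cycDist k a b := by
  wlog hlt : a < b generalizing a b
  · rw [cycDist_comm]
    exact this hb ha hab.symm h.symm (by omega)
  obtain ⟨t, ht⟩ := (Nat.modEq_iff_dvd' hlt.le).1 h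
  have hk' : s * (k / s) + 1 = k := hk ▸ Nat.div_add_mod k s
  have ht_pos : 0 < t := Nat.pos_of_ne_zero (by rintro rfl; omega)
  have ht_lt : t < k / s := Nat.lt_of_mul_lt_mul_left (a := s) (by omega)
  have : s * t + s ≤ s * (k / s) := by simpa [mul_add] using Nat.mul_le_mul_left s ht_lt
  have : s ≤ s * t := Nat.le_mul_of_pos_right s ht_pos
  simp only [cycDist, Nat.dist]
  omega

theorem not_hasLayout_cyclicMatching {s k : ℕ} (hs : 0 < s) (hsk : s ≤ k) (h2s : 2 * s ≤ k + 1)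
    (hk : ¬ s ∣ k) : ¬ (cyclicMatching s k hs hsk).HasLayout s 0 := by
  rw [hasLayout_iff_of_edges_eq_image rfl]
  rintro ⟨c, hlt, hpage⟩
  have hc_lt : ∀ i, c i < s := fun i => hlt i (mem_univ i)
  have hclass (t : ℕ) : #{i | c i = t} * s ≤ k := by
    refine card_mul_le_of_le_cycDist hsk fun i hi j hj hij => ?_
    simp only [mem_filter, mem_univ, true_and] at hi hj
    have hcross := (hpage i (mem_univ i) j (mem_univ j) (hi.trans hj.symm)).1 (hc_lt i)
    exact not_lt.1 (mt (cross_chord_iff hsk h2s hij).2 hcross)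
  have hcover : k ≤ s * (k / s) := calc
    k = #(univ : Finset (Fin k)) := by simp
    _ = ∑ t ∈ range s, #{i | c i = t} :=
      card_eq_sum_card_fiberwise fun i _ => mem_range.2 (hc_lt i)
    _ ≤ ∑ _t ∈ range s, k / s := sum_le_sum fun t _ => (Nat.le_div_iff_mul_le hs).2 (hclass t)
    _ = s * (k / s) := by simp
  exact hk (Nat.dvd_of_mod_eq_zero (by have := Nat.div_add_mod k s; omega))

theorem hasLayout_erase_cyclicMatching {s k : ℕ} (hs : 0 < s) (hsk : s ≤ k)
    (h2s : 2 * s ≤ k + 1) (hk : k % s = 1) (i₀ : Fin k) :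
    ((cyclicMatching s k hs hsk).erase (chord hsk i₀)).HasLayout s 0 := by
  have hE : ((cyclicMatching s k hs hsk).erase (chord hsk i₀)).E =
      (univ.erase i₀).image (chord hsk) := (image_erase (chord_injective hs hsk) _ _).symm
  rw [hasLayout_iff_of_edges_eq_image hE]
  -- rotate the cycle so that the deleted chord sits at position `k - 1`, then colour by position
  have hrot : k - 1 - i₀ < k := by omega
  refine ⟨fun i => (i + (k - 1 - i₀)) % k % s, fun i _ => Nat.mod_lt _ hs, fun i hi j hj hij =>
    ⟨fun _ => ?_, fun h => absurd h (not_le.2 (Nat.mod_lt _ hs))⟩⟩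
  rw [mem_erase] at hi hj
  have := i.isLt; have := j.isLt; have := i₀.isLt
  have hi' := Fin.val_ne_of_ne hi.1; have hj' := Fin.val_ne_of_ne hj.1
  by_cases hij' : i = j
  · subst hij'
    simp [Cross]
  have hij'' := Fin.val_ne_of_ne hij'
  refine mt (cross_chord_iff hsk h2s hij').1 (not_lt.2 ?_)
  rw [← cycDist_add_mod i.isLt j.isLt hrot]
  refine le_cycDist_of_modEq hk ?_ ?_ ?_ hij <;>
    simp only [Nat.add_mod_eq_ite, Nat.mod_eq_of_lt i.isLt, Nat.mod_eq_of_lt j.isLt,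
      Nat.mod_eq_of_lt hrot] <;>
    split_ifs <;> omega

theorem isSQCritical_cyclicMatching {s k : ℕ} (hs : 0 < s) (hsk : s ≤ k) (h2s : 2 * s ≤ k + 1)
    (hk : k % s = 1) : (cyclicMatching s k hs hsk).IsSQCritical s 0 := by
  refine ⟨not_hasLayout_cyclicMatching hs hsk h2s ?_, ?_⟩
  · rw [Nat.dvd_iff_mod_eq_zero, hk]
    exact one_ne_zero
  · intro e he
    obtain ⟨i₀, -, rfl⟩ := mem_image.1 he
    exact hasLayout_erase_cyclicMatching hs hsk h2s hk i₀

theorem isMatching_cyclicMatching {s k : ℕ} (hs : 0 < s) (hsk : s ≤ k) :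
    (cyclicMatching s k hs hsk).IsMatching :=
  isMatching_of_existsUnique rfl (existsUnique_chord_endpoint hs hsk)

/-- For every `s ≥ 2` and every `n ≥ 3`, there exists an
`(s,0)`-critical ordered matching with at least `n` vertices. -/
theorem exists_large_s0_critical_matching (s n : ℕ) (hs : 2 ≤ s) (hn : 3 ≤ n) :
    ∃ G : OGraph, G.IsMatching ∧ n ≤ G.n ∧ G.IsSQCritical s 0 := by
  have hk : (n * s + 1) % s = 1 := by
    rw [Nat.add_mod, Nat.mul_mod_left, zero_add, Nat.mod_mod, Nat.mod_eq_of_lt hs]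
  have hn_le : n ≤ n * s := Nat.le_mul_of_pos_right n (by omega)
  have h3s : 3 * s ≤ n * s := Nat.mul_le_mul_right s hn
  have hsk : s ≤ n * s + 1 := by omega
  exact ⟨cyclicMatching s (n * s + 1) (by omega) hsk, isMatching_cyclicMatching _ hsk,
    show n ≤ 2 * (n * s + 1) by omega, isSQCritical_cyclicMatching _ hsk (by omega) hk⟩

end MixedLayouts
end
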